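/- arXiv:1906.09047 — 3 statements merged into one kernel-verified Lean document; each statement's English description precedes it below -/
import Mathlib

section
/- For k ∈ {1, ..., ⌊n/2⌋}, the error term η(k) = Σ_{ℓ=0}^{k−1} p(k,ℓ) Σ_{j=ℓ+1}^{k} 1/Δ(j) of the (1+1) EA on OneMax satisfies η(k) ≤ 1 + 2e^{5/2}/(n−1). -/
/-!
Let `p = 1/n`. The drift is `Δ(k) = E[(L - J)⁺]` for independent `L ~ Bin(k, p)`, `J ~ Bin(n - k, p)`.
Writing `Δ(k + 1) = E[(L + X - J')⁺]` and `Δ(k) = E[(L - J' - Y)⁺]` with `J' ~ Bin(n - k - 1, p)` and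
Bernoulli(`p`) trials `X`, `Y`, the integrands differ by at most `X + Y`, so `Δ(k + 1) - Δ(k) ≤ 2p`;
the single-flip term alone gives `Δ(j) ≥ j/(en)`. Together, `1/Δ(j) ≤ (1 + 2e(k - j)/j)/Δ(k)` for
`j ≤ k`, and summing over `j`,
`Δ(k) η(k) ≤ ∑ₗ p(k,ℓ)(k - ℓ) + e ∑ₗ p(k,ℓ)(k - ℓ)(k - ℓ - 1)/(ℓ + 1)`.
The first sum is the contribution of the improving steps to `Δ(k)`, hence at most `Δ(k)`.
For `k ≤ n/2`, `p(k,ℓ) ≤ e^{1/2} C(k, k - ℓ) n^{-(k - ℓ)}`, and the identity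
`C(k, d) d(d - 1)/(k - d + 1) = k C(k - 1, d - 2)` bounds the second sum by `e k/n²`.
With `Δ(k) ≥ k/(en)` the error term is at most `e³/n ≤ 2e^{5/2}/(n - 1)`.
-/

open Finset

/-- Drift `Δ_n(k)` of the number of zero-bits of the (1+1) EA on OneMax. -/
noncomputable def Delta (n k : ℕ) : ℝ :=
  ∑ l ∈ Icc 1 k, ∑ j ∈ range (l + 1),
    ((l : ℝ) - j) * (k.choose l) * ((n - k).choose j) *
      (1 / n) ^ (l + j) * (1 - 1 / n) ^ (n - l - j)

/-- One-step transition probability of the (1+1) EA on OneMax from a state with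
`k` zero-bits to a state with `j` zero-bits. -/
noncomputable def pOneMax (n k j : ℕ) : ℝ :=
  if j ≤ k then
    ∑ i ∈ range (min j (n - k) + 1),
      (k.choose (k - j + i)) * ((n - k).choose i) *
        (1 / n : ℝ) ^ (k - j + 2 * i) * (1 - 1 / n) ^ (n - (k - j) - 2 * i)
  else 0

open Real

theorem sum_range_eq_sum_range_of_eq_zero {M : Type*} [AddCommMonoid M] {f : ℕ → M} {a b : ℕ}
    (ha : ∀ i, a ≤ i → f i = 0) (hb : ∀ i, b ≤ i → f i = 0) :
    ∑ i ∈ range a, f i = ∑ i ∈ range b, f i := by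
  rcases le_total a b with h | h
  · exact sum_subset (range_subset_range.2 h) fun i _ hi => ha i (by simpa using hi)
  · exact (sum_subset (range_subset_range.2 h) fun i _ hi => hb i (by simpa using hi)).symm

theorem one_div_natCast_le_one (n : ℕ) : (1 : ℝ) / n ≤ 1 := by
  simpa only [one_div] using Nat.cast_inv_le_one (α := ℝ) n

noncomputable def binomialExpect (p : ℝ) (a : ℕ) (f : ℕ → ℝ) : ℝ :=
  ∑ l ∈ range (a + 1), (a.choose l : ℝ) * p ^ l * (1 - p) ^ (a - l) * f l

section binomialExpect

variable {p : ℝ} {a : ℕ} {f g : ℕ → ℝ}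

theorem binomialExpect_add :
    binomialExpect p a (fun l => f l + g l) = binomialExpect p a f + binomialExpect p a g := by
  simp only [binomialExpect, mul_add, sum_add_distrib]

theorem binomialExpect_const_mul (c : ℝ) :
    binomialExpect p a (fun l => c * f l) = c * binomialExpect p a f := by
  simp only [binomialExpect, mul_sum]
  exact sum_congr rfl fun l _ => by ring

theorem binomialExpect_const (p : ℝ) (a : ℕ) (c : ℝ) : binomialExpect p a (fun _ => c) = c := by
  have total : ∑ l ∈ range (a + 1), (a.choose l : ℝ) * p ^ l * (1 - p) ^ (a - l) = 1 :=
    calc _ = (p + (1 - p)) ^ a := by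
          rw [add_pow]
          exact sum_congr rfl fun l _ => by ring
      _ = 1 := by rw [add_sub_cancel, one_pow]
  rw [binomialExpect, ← sum_mul, total, one_mul]

theorem binomialExpect_mono (hp₀ : 0 ≤ p) (hp₁ : p ≤ 1) (h : ∀ l, f l ≤ g l) :
    binomialExpect p a f ≤ binomialExpect p a g := by
  have : 0 ≤ 1 - p := sub_nonneg.2 hp₁
  exact sum_le_sum fun l _ => mul_le_mul_of_nonneg_left (h l) (by positivity)

theorem binomialExpect_succ :
    binomialExpect p (a + 1) f =
      (1 - p) * binomialExpect p a f + p * binomialExpect p a (fun l => f (l + 1)) := by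
  have pascal_upper : ∑ l ∈ range (a + 1),
        (a.choose (l + 1) : ℝ) * p ^ (l + 1) * (1 - p) ^ (a - l) * f (l + 1) + (1 - p) ^ (a + 1) * f 0
      = (1 - p) * binomialExpect p a f := by
    conv_lhs => rw [sum_range_succ, Nat.choose_succ_self]
    conv_rhs => rw [binomialExpect, mul_sum, sum_range_succ']
    simp only [Nat.cast_zero, zero_mul, add_zero, Nat.choose_zero_right, Nat.cast_one, pow_zero,
      one_mul, Nat.sub_zero]
    congr 1
    · refine sum_congr rfl fun l hl => ?_
      rw [show a - l = a - (l + 1) + 1 by have := mem_range.1 hl; omega, pow_succ]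
      ring
    · ring
  conv_lhs => rw [binomialExpect, sum_range_succ']
  simp only [Nat.choose_succ_succ', Nat.cast_add, add_mul, sum_add_distrib, Nat.add_sub_add_right,
    Nat.choose_zero_right, Nat.cast_one, pow_zero, one_mul, Nat.sub_zero]
  rw [add_assoc, pascal_upper, add_comm]
  congr 1
  rw [binomialExpect, mul_sum]
  exact sum_congr rfl fun l _ => by ring

theorem binomialExpect_succ_sub_binomialExpect_succ_le {b : ℕ} {w : ℕ → ℕ → ℝ} {c : ℝ}
    (hp₀ : 0 ≤ p) (hp₁ : p ≤ 1) (hw : ∀ l j, w (l + 1) j ≤ w l (j + 1) + c) :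
    binomialExpect p (a + 1) (fun l => binomialExpect p b (w l)) -
      binomialExpect p a (fun l => binomialExpect p (b + 1) (w l)) ≤ p * c := by
  have shift : binomialExpect p a (fun l => binomialExpect p b (w (l + 1))) ≤
      binomialExpect p a (fun l => binomialExpect p b (fun j => w l (j + 1))) + c :=
    calc _ ≤ binomialExpect p a (fun l => binomialExpect p b (fun j => w l (j + 1) + c)) :=
          binomialExpect_mono hp₀ hp₁ fun l => binomialExpect_mono hp₀ hp₁ fun j => hw l j
      _ = _ := by simp only [binomialExpect_add, binomialExpect_const]
  simp only [binomialExpect_succ, binomialExpect_add, binomialExpect_const_mul]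
  linarith [mul_le_mul_of_nonneg_left shift hp₀]

end binomialExpect

/-- The probability that standard bit mutation on `n` bits flips exactly `d` of the `k`
zero-bits and `i` of the `n - k` one-bits. -/
noncomputable def flipProb (n k d i : ℕ) : ℝ :=
  k.choose d * (n - k).choose i * (1 / n : ℝ) ^ (d + i) * (1 - 1 / n) ^ (n - d - i)

theorem flipProb_nonneg (n k d i : ℕ) : 0 ≤ flipProb n k d i := by
  have : (0 : ℝ) ≤ 1 - 1 / n := sub_nonneg.2 (one_div_natCast_le_one n)
  unfold flipProb
  positivity

theorem flipProb_eq_zero_of_lt {n k d i : ℕ} (h : n - k < i) : flipProb n k d i = 0 := by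
  simp [flipProb, Nat.choose_eq_zero_of_lt h]

theorem Delta_eq_sum_flipProb (n k : ℕ) :
    Delta n k = ∑ d ∈ Icc 1 k, ∑ i ∈ range (d + 1), ((d : ℝ) - i) * flipProb n k d i := by
  simp only [Delta, flipProb, mul_assoc]

theorem pOneMax_eq_sum_flipProb {n k l : ℕ} (hl : l ≤ k) :
    pOneMax n k l = ∑ i ∈ range (min l (n - k) + 1), flipProb n k (k - l + i) i := by
  rw [pOneMax, if_pos hl]
  refine sum_congr rfl fun i _ => ?_
  rw [flipProb, show k - l + i + i = k - l + 2 * i by omega,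
    show n - (k - l + i) - i = n - (k - l) - 2 * i by omega]

theorem pOneMax_nonneg (n k l : ℕ) : 0 ≤ pOneMax n k l := by
  by_cases hl : l ≤ k
  · rw [pOneMax_eq_sum_flipProb hl]
    exact sum_nonneg fun i _ => flipProb_nonneg ..
  · simp [pOneMax, hl]

theorem binomialExpect_binomialExpect_eq_sum_flipProb {n k : ℕ} (hk : k ≤ n) (w : ℕ → ℕ → ℝ) :
    binomialExpect (1 / n) k (fun d => binomialExpect (1 / n) (n - k) (w d)) =
      ∑ d ∈ range (k + 1), ∑ i ∈ range (n - k + 1), flipProb n k d i * w d i := by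
  simp only [binomialExpect, flipProb, mul_sum]
  refine sum_congr rfl fun d hd => sum_congr rfl fun i hi => ?_
  have hd := mem_range.1 hd
  have hi := mem_range.1 hi
  rw [show n - d - i = (k - d) + (n - k - i) by omega, pow_add, pow_add]
  ring

theorem Delta_eq_binomialExpect {n k : ℕ} (hk : k ≤ n) :
    Delta n k = binomialExpect (1 / n) k
      (fun d => binomialExpect (1 / n) (n - k) (fun i => max ((d : ℝ) - i) 0)) := by
  rw [binomialExpect_binomialExpect_eq_sum_flipProb hk, Delta_eq_sum_flipProb]
  calc _ = ∑ d ∈ Icc 1 k, ∑ i ∈ range (n - k + 1), flipProb n k d i * max ((d : ℝ) - i) 0 := by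
        refine sum_congr rfl fun d _ => ?_
        calc _ = ∑ i ∈ range (d + 1), flipProb n k d i * max ((d : ℝ) - i) 0 :=
              sum_congr rfl fun i hi => by
                rw [max_eq_left (sub_nonneg.2 (Nat.cast_le.2 (Nat.lt_succ_iff.1 (mem_range.1 hi)))),
                  mul_comm]
          _ = _ := sum_range_eq_sum_range_of_eq_zero
              (fun i hi => by rw [max_eq_right (by simp; omega), mul_zero])
              (fun i hi => by rw [flipProb_eq_zero_of_lt (by omega), zero_mul])
    _ = _ := by
        refine sum_subset (fun d hd => by simp at hd ⊢; omega) fun d hdk hd => ?_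
        obtain rfl : d = 0 := by simp at hd hdk; omega
        simp

theorem Delta_succ_sub_Delta_le {n m : ℕ} (hm : m + 1 ≤ n) :
    Delta n (m + 1) - Delta n m ≤ 2 / n := by
  rw [Delta_eq_binomialExpect hm, Delta_eq_binomialExpect (by omega : m ≤ n),
    show n - m = n - (m + 1) + 1 by omega]
  calc _ ≤ (1 / n : ℝ) * 2 := binomialExpect_succ_sub_binomialExpect_succ_le (by positivity)
          (one_div_natCast_le_one n) fun l j => by
        push_cast
        exact max_le (by linarith [le_max_left ((l : ℝ) - (j + 1)) 0])
          (by linarith [le_max_right ((l : ℝ) - (j + 1)) 0])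
    _ = 2 / n := by ring

theorem Delta_sub_Delta_le {n j k : ℕ} (hjk : j ≤ k) (hk : k ≤ n) :
    Delta n k - Delta n j ≤ 2 * ((k : ℝ) - j) / n := by
  induction k, hjk using Nat.le_induction with
  | base => simp
  | succ m _ ih =>
    have step := Delta_succ_sub_Delta_le hk
    have := ih (by omega)
    push_cast
    linarith [show 2 * ((m : ℝ) + 1 - j) / n = 2 * ((m : ℝ) - j) / n + 2 / n by ring]

theorem exp_neg_one_le_one_sub_one_div_pow {n : ℕ} (hn : 1 ≤ n) :
    exp (-1) ≤ (1 - 1 / n : ℝ) ^ (n - 1) := by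
  obtain ⟨m, rfl⟩ : ∃ m, n = m + 1 := ⟨n - 1, by omega⟩
  rcases Nat.eq_zero_or_pos m with rfl | hm
  · simp
  · have hm' : (m : ℝ) ≠ 0 := by positivity
    have hinv : (1 - 1 / ((m + 1 : ℕ) : ℝ)) = (1 + (m : ℝ)⁻¹)⁻¹ := by
      push_cast
      field_simp
      ring
    rw [Nat.add_sub_cancel, hinv, inv_pow, exp_neg]
    exact inv_anti₀ (by positivity) one_add_inv_pow_le_exp

theorem div_exp_mul_le_Delta {n j : ℕ} (hn : 1 ≤ n) (hj : 1 ≤ j) :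
    j / (exp 1 * n) ≤ Delta n j := by
  have single : flipProb n j 1 0 ≤ Delta n j := by
    rw [Delta_eq_sum_flipProb]
    have inner_nonneg : ∀ d, 0 ≤ ∑ i ∈ range (d + 1), ((d : ℝ) - i) * flipProb n j d i :=
      fun d => sum_nonneg fun i hi => mul_nonneg
        (sub_nonneg.2 (Nat.cast_le.2 (Nat.lt_succ_iff.1 (mem_range.1 hi)))) (flipProb_nonneg ..)
    calc flipProb n j 1 0 = ∑ i ∈ range 1, (((1 : ℕ) : ℝ) - i) * flipProb n j 1 i := by simp
      _ ≤ ∑ i ∈ range (1 + 1), (((1 : ℕ) : ℝ) - i) * flipProb n j 1 i := by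
        rw [sum_range_succ _ 1]
        simp
      _ ≤ _ := single_le_sum (fun d _ => inner_nonneg d) (by simp; omega)
  calc (j : ℝ) / (exp 1 * n) = j / n * exp (-1) := by rw [exp_neg]; field_simp
    _ ≤ j / n * (1 - 1 / n) ^ (n - 1) := by gcongr; exact exp_neg_one_le_one_sub_one_div_pow hn
    _ = flipProb n j 1 0 := by
        simp only [flipProb, Nat.choose_one_right, Nat.choose_zero_right, Nat.cast_one, add_zero,
          pow_one, Nat.sub_zero]
        ring
    _ ≤ Delta n j := single

theorem Delta_pos {n j : ℕ} (hn : 1 ≤ n) (hj : 1 ≤ j) : 0 < Delta n j :=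
  (div_pos (Nat.cast_pos.2 hj) (mul_pos (exp_pos 1) (Nat.cast_pos.2 hn))).trans_le
    (div_exp_mul_le_Delta hn hj)

theorem one_div_Delta_le {n j : ℕ} (hn : 1 ≤ n) (hj : 1 ≤ j) :
    1 / Delta n j ≤ exp 1 * n / j := by
  rw [one_div_le (Delta_pos hn hj)
    (div_pos (mul_pos (exp_pos 1) (Nat.cast_pos.2 hn)) (Nat.cast_pos.2 hj)), one_div_div]
  exact div_exp_mul_le_Delta hn hj

theorem one_div_Delta_le_add {n j k : ℕ} (hn : 1 ≤ n) (hj : 1 ≤ j) (hjk : j ≤ k) (hk : k ≤ n) :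
    1 / Delta n j ≤ 1 / Delta n k + 2 * exp 1 / j * ((k : ℝ) - j) / Delta n k := by
  have hΔj := Delta_pos hn hj
  have hΔk := Delta_pos hn (hj.trans hjk)
  have hkj : (0 : ℝ) ≤ k - j := sub_nonneg.2 (Nat.cast_le.2 hjk)
  have hn' : (n : ℝ) ≠ 0 := by positivity
  have hj' : (j : ℝ) ≠ 0 := by positivity
  calc 1 / Delta n j
      = 1 / Delta n k + (Delta n k - Delta n j) * (1 / Delta n j) * (1 / Delta n k) := by
        field_simp
        ring
    _ ≤ 1 / Delta n k + 2 * ((k : ℝ) - j) / n * (exp 1 * n / j) * (1 / Delta n k) := by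
        gcongr _ + ?_ * ?_ * _
        exacts [Delta_sub_Delta_le hjk hk, one_div_Delta_le hn hj]
    _ = _ := by
        field_simp

theorem sum_Icc_natCast_sub {l k : ℕ} (hlk : l ≤ k) :
    ∑ j ∈ Icc (l + 1) k, ((k : ℝ) - j) = ((k : ℝ) - l) * ((k : ℝ) - l - 1) / 2 := by
  induction k, hlk using Nat.le_induction with
  | base => simp
  | succ m hlm ih =>
    have hcard : ((Icc (l + 1) m).card : ℝ) = m - l := by
      rw [Nat.card_Icc, Nat.add_sub_add_right, Nat.cast_sub hlm]
    rw [sum_Icc_succ_top (by omega)]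
    push_cast
    simp only [add_sub_right_comm _ (1 : ℝ), sum_add_distrib, ih, sum_const, nsmul_eq_mul, mul_one,
      hcard]
    ring

theorem sum_one_div_Delta_Icc_le {n l k : ℕ} (hn : 1 ≤ n) (hlk : l ≤ k) (hk : k ≤ n) :
    ∑ j ∈ Icc (l + 1) k, 1 / Delta n j ≤
      ((k : ℝ) - l + exp 1 * (((k : ℝ) - l) * ((k : ℝ) - l - 1) / (l + 1))) / Delta n k := by
  calc ∑ j ∈ Icc (l + 1) k, 1 / Delta n j
      ≤ ∑ j ∈ Icc (l + 1) k, (1 / Delta n k + 2 * exp 1 / (l + 1) * ((k : ℝ) - j) / Delta n k) := by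
        refine sum_le_sum fun j hj => ?_
        obtain ⟨hlj, hjk⟩ := mem_Icc.1 hj
        refine (one_div_Delta_le_add hn (by omega) hjk hk).trans ?_
        have := Delta_pos hn (by omega : 1 ≤ k)
        have : (0 : ℝ) ≤ k - j := sub_nonneg.2 (Nat.cast_le.2 hjk)
        gcongr
        exact_mod_cast hlj
    _ = (k - l : ℕ) * (1 / Delta n k) +
          2 * exp 1 / (l + 1) * (∑ j ∈ Icc (l + 1) k, ((k : ℝ) - j)) / Delta n k := by
        rw [sum_add_distrib, sum_const, Nat.card_Icc, Nat.add_sub_add_right, nsmul_eq_mul, mul_sum,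
          sum_div]
    _ = _ := by
        rw [sum_Icc_natCast_sub hlk, Nat.cast_sub hlk]
        ring

theorem sum_pOneMax_mul_sub_le_Delta (n k : ℕ) :
    ∑ l ∈ range k, pOneMax n k l * ((k : ℝ) - l) ≤ Delta n k := by
  classical
  let g : (Σ _ : ℕ, ℕ) → ℝ := fun s => ((s.1 : ℝ) - s.2) * flipProb n k s.1 s.2
  let φ : (Σ _ : ℕ, ℕ) → (Σ _ : ℕ, ℕ) := fun s => ⟨k - s.1 + s.2, s.2⟩
  let A := (range k).sigma fun l => range (min l (n - k) + 1)
  let B := (Icc 1 k).sigma fun d => range (d + 1)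
  have hA : ∑ l ∈ range k, pOneMax n k l * ((k : ℝ) - l) = ∑ s ∈ A, g (φ s) := by
    rw [sum_sigma]
    refine sum_congr rfl fun l hl => ?_
    have hlk := (mem_range.1 hl).le
    rw [pOneMax_eq_sum_flipProb hlk, sum_mul]
    refine sum_congr rfl fun i _ => ?_
    simp only [g, φ]
    push_cast [Nat.cast_sub hlk]
    ring
  have hinj : Set.InjOn φ A := by
    rintro ⟨l, i⟩ hx ⟨l', i'⟩ hy h
    simp only [φ, Sigma.mk.inj_iff, heq_eq_eq] at h
    obtain ⟨h, rfl⟩ := h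
    simp only [A, coe_sigma, Set.mem_sigma_iff, coe_range, Set.mem_Iio] at hx hy
    congr
    omega
  have himage : A.image φ ⊆ B := by
    intro s hs
    obtain ⟨⟨l, i⟩, hx, rfl⟩ := mem_image.1 hs
    simp only [A, B, φ, mem_sigma, mem_range, mem_Icc] at hx ⊢
    omega
  calc _ = ∑ s ∈ A.image φ, g s := by rw [hA, sum_image hinj]
    _ ≤ ∑ s ∈ B, g s := sum_le_sum_of_subset_of_nonneg himage fun s hs _ => by
        simp only [B, mem_sigma, mem_range] at hs
        exact mul_nonneg (sub_nonneg.2 (Nat.cast_le.2 (by omega))) (flipProb_nonneg ..)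
    _ = Delta n k := by rw [sum_sigma, Delta_eq_sum_flipProb]

theorem Nat.choose_add_le_choose_mul_choose (k a i : ℕ) :
    k.choose (a + i) ≤ k.choose a * (k - a).choose i := by
  rcases le_or_gt (a + i) k with h | h
  · calc k.choose (a + i) ≤ k.choose (a + i) * (a + i).choose a :=
          Nat.le_mul_of_pos_right _ (Nat.choose_pos (by omega))
      _ = k.choose a * (k - a).choose i := by rw [Nat.choose_mul (by omega), Nat.add_sub_cancel_left]
  · simp [Nat.choose_eq_zero_of_lt h]

theorem choose_mul_choose_mul_pow_le (a b i : ℕ) {x : ℝ} (hx : 0 ≤ x) :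
    (a.choose i : ℝ) * b.choose i * x ^ i ≤ (a * b * x) ^ i / i.factorial := by
  calc (a.choose i : ℝ) * b.choose i * x ^ i ≤ (a ^ i / i.factorial) * b ^ i * x ^ i := by
        gcongr
        · exact Nat.choose_le_pow_div i a
        · exact_mod_cast Nat.choose_le_pow b i
    _ = _ := by rw [mul_pow, mul_pow]; ring

theorem flipProb_sub_add_le {n k l : ℕ} (hlk : l ≤ k) (hl : 2 * l ≤ n) (i : ℕ) :
    flipProb n k (k - l + i) i ≤
      k.choose (k - l) * (1 / n : ℝ) ^ (k - l) * ((1 / 2) ^ i / i.factorial) := by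
  have hq₀ : (0 : ℝ) ≤ 1 - 1 / n := sub_nonneg.2 (one_div_natCast_le_one n)
  have hq₁ : (1 : ℝ) - 1 / n ≤ 1 := by simp
  have hsmall : (l : ℝ) * (n - k : ℕ) * (1 / n : ℝ) ^ 2 ≤ 1 / 2 := by
    rcases Nat.eq_zero_or_pos n with rfl | hn
    · simp
    have h : ((2 * l * (n - k) : ℕ) : ℝ) ≤ (n * n : ℕ) := by
      exact_mod_cast Nat.mul_le_mul hl (Nat.sub_le n k)
    push_cast at h
    rw [div_pow, one_pow, mul_one_div, div_le_iff₀ (by positivity)]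
    linarith
  calc flipProb n k (k - l + i) i
      ≤ k.choose (k - l + i) * (n - k).choose i * (1 / n : ℝ) ^ (k - l + i + i) := by
        unfold flipProb
        exact mul_le_of_le_one_right (by positivity) (pow_le_one₀ hq₀ hq₁)
    _ ≤ (k.choose (k - l) * l.choose i) * (n - k).choose i *
          ((1 / n : ℝ) ^ (k - l) * ((1 / n) ^ 2) ^ i) := by
        rw [← pow_mul, ← pow_add, show k - l + 2 * i = k - l + i + i by ring]
        gcongr
        exact_mod_cast (Nat.choose_add_le_choose_mul_choose k (k - l) i).trans_eq
          (by rw [Nat.sub_sub_self hlk])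
    _ = k.choose (k - l) * (1 / n : ℝ) ^ (k - l) *
          (l.choose i * (n - k).choose i * ((1 / n) ^ 2) ^ i) := by ring
    _ ≤ _ := by
        gcongr
        calc _ ≤ ((l : ℝ) * (n - k : ℕ) * (1 / n) ^ 2) ^ i / i.factorial :=
              choose_mul_choose_mul_pow_le _ _ _ (by positivity)
          _ ≤ _ := by gcongr

theorem pOneMax_le {n k l : ℕ} (hlk : l ≤ k) (hl : 2 * l ≤ n) :
    pOneMax n k l ≤ exp (1 / 2) * k.choose (k - l) * (1 / n : ℝ) ^ (k - l) := by
  rw [pOneMax_eq_sum_flipProb hlk]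
  calc _ ≤ ∑ i ∈ range (min l (n - k) + 1),
          k.choose (k - l) * (1 / n : ℝ) ^ (k - l) * ((1 / 2) ^ i / i.factorial) :=
        sum_le_sum fun i _ => flipProb_sub_add_le hlk hl i
    _ ≤ k.choose (k - l) * (1 / n : ℝ) ^ (k - l) * exp (1 / 2) := by
        rw [← mul_sum]
        gcongr
        exact sum_le_exp_of_nonneg (by norm_num) _
    _ = _ := by ring

theorem Nat.choose_mul_succ_sub_mul_sub {m l : ℕ} (hl : l ≤ m) :
    (m + 1).choose l * (m + 1 - l) * (m - l) = (m + 1) * m.choose (l + 1) * (l + 1) := by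
  rw [← Nat.choose_succ_right_eq, mul_right_comm, show m - l = m + 1 - (l + 1) by omega,
    ← Nat.choose_mul_succ_eq]
  ring

theorem sum_choose_sub_mul_pow_le {p : ℝ} (hp : 0 ≤ p) (k : ℕ) :
    ∑ l ∈ range k, (k.choose (k - l) : ℝ) * p ^ (k - l) * (((k : ℝ) - l) * ((k : ℝ) - l - 1) / (l + 1))
      ≤ k * p ^ 2 * (1 + p) ^ (k - 1) := by
  rcases k with _ | m
  · simp
  have hterm : ∀ l ∈ range m,
      ((m + 1).choose (m + 1 - l) : ℝ) * p ^ (m + 1 - l) *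
        ((((m + 1 : ℕ) : ℝ) - l) * (((m + 1 : ℕ) : ℝ) - l - 1) / (l + 1))
      = (m + 1 : ℕ) * p ^ 2 * ((m.choose (l + 1) : ℝ) * p ^ (m - (l + 1))) := by
    intro l hl
    have hlt := mem_range.1 hl
    have hl := hlt.le
    have h := congrArg (Nat.cast : ℕ → ℝ) (Nat.choose_mul_succ_sub_mul_sub hl)
    push_cast [Nat.cast_sub hl, Nat.cast_sub (hl.trans m.le_succ)] at h
    rw [Nat.choose_symm (by omega : l ≤ m + 1), show m + 1 - l = m - (l + 1) + 2 by omega, pow_add]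
    field_simp
    push_cast
    linear_combination p ^ (m - (l + 1)) * p ^ 2 * h
  rw [sum_range_succ, sum_congr rfl hterm, ← mul_sum, Nat.add_sub_cancel]
  simp only [Nat.cast_add, Nat.cast_one, add_sub_cancel_left, sub_self, mul_zero, zero_div,
    add_zero]
  gcongr
  calc ∑ l ∈ range m, (m.choose (l + 1) : ℝ) * p ^ (m - (l + 1))
      ≤ ∑ l ∈ range (m + 1), (m.choose l : ℝ) * p ^ (m - l) := by
        rw [sum_range_succ' _ m]
        exact le_add_of_nonneg_right (by positivity)
    _ = (1 + p) ^ m := by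
        rw [add_pow]
        exact sum_congr rfl fun l _ => by ring

theorem sub_mul_sub_sub_one_div_nonneg {k l : ℕ} (hl : l < k) :
    0 ≤ ((k : ℝ) - l) * ((k : ℝ) - l - 1) / (l + 1) := by
  have : (l : ℝ) + 1 ≤ k := by exact_mod_cast hl
  exact div_nonneg (mul_nonneg (by linarith) (by linarith)) (by positivity)

theorem sum_pOneMax_mul_le {n k : ℕ} (hk : 2 * k ≤ n) :
    ∑ l ∈ range k, pOneMax n k l * (((k : ℝ) - l) * ((k : ℝ) - l - 1) / (l + 1)) ≤
      exp 1 * k / n ^ 2 := by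
  have hpow : (1 + 1 / n : ℝ) ^ (k - 1) ≤ exp (1 / 2) := by
    calc (1 + 1 / n : ℝ) ^ (k - 1) ≤ exp (1 / n) ^ (k - 1) := by
          gcongr
          linarith [add_one_le_exp (1 / n : ℝ)]
      _ = exp ((k - 1 : ℕ) / n) := by rw [← exp_nat_mul]; ring_nf
      _ ≤ exp (1 / 2) := by
          refine exp_le_exp.2 ?_
          rcases Nat.eq_zero_or_pos n with rfl | hn
          · simp
          rw [div_le_iff₀ (by positivity)]
          have : ((k - 1 : ℕ) : ℝ) * 2 ≤ n := by exact_mod_cast (by omega : (k - 1) * 2 ≤ n)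
          linarith
  calc _ ≤ ∑ l ∈ range k, exp (1 / 2) * k.choose (k - l) * (1 / n : ℝ) ^ (k - l) *
          (((k : ℝ) - l) * ((k : ℝ) - l - 1) / (l + 1)) :=
        sum_le_sum fun l hl => by
          have hlk := mem_range.1 hl
          exact mul_le_mul_of_nonneg_right (pOneMax_le hlk.le (by omega))
            (sub_mul_sub_sub_one_div_nonneg hlk)
    _ = exp (1 / 2) * ∑ l ∈ range k, k.choose (k - l) * (1 / n : ℝ) ^ (k - l) *
          (((k : ℝ) - l) * ((k : ℝ) - l - 1) / (l + 1)) := by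
        rw [mul_sum]
        exact sum_congr rfl fun l _ => by ring
    _ ≤ exp (1 / 2) * (k * (1 / n) ^ 2 * exp (1 / 2)) := by
        gcongr
        exact (sum_choose_sub_mul_pow_le (by positivity) k).trans (by gcongr)
    _ = exp (1 / 2 + 1 / 2) * k / n ^ 2 := by rw [exp_add]; ring
    _ = exp 1 * k / n ^ 2 := by norm_num

theorem exp_three_div_le {n : ℕ} (hn : 2 ≤ n) :
    exp 3 / n ≤ 2 * exp 1 ^ ((5 : ℝ) / 2) / ((n : ℝ) - 1) := by
  have hn' : (2 : ℝ) ≤ n := by exact_mod_cast hn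
  have exp_half_le_two : exp (1 / 2) ≤ 2 :=
    (le_log_iff_exp_le two_pos).1 (by linarith [log_two_gt_d9])
  calc exp 3 / n = exp (5 / 2) * exp (1 / 2) / n := by rw [← exp_add]; norm_num
    _ ≤ 2 * exp (5 / 2) / n := by rw [mul_comm 2]; gcongr
    _ ≤ 2 * exp 1 ^ ((5 : ℝ) / 2) / ((n : ℝ) - 1) := by
        rw [exp_one_rpow]
        gcongr <;> linarith

/-- For `k ∈ {1, …, ⌊n/2⌋}` the error term
`η(k) = ∑_{ℓ=0}^{k−1} p(k,ℓ) ∑_{j=ℓ+1}^{k} 1/Δ(j)` (the drift of the potential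
`g(k) = ∑_{j=1}^{k} 1/Δ(j)`) of the (1+1) EA on OneMax satisfies
`η(k) ≤ 1 + 2e^{5/2}/(n−1)`. -/
theorem eta_upper_bound (n k : ℕ) (hn : 2 ≤ n) (hk1 : 1 ≤ k) (hkn : k ≤ n / 2) :
    (∑ l ∈ range k, pOneMax n k l * ∑ j ∈ Icc (l + 1) k, 1 / Delta n j)
      ≤ 1 + 2 * Real.exp 1 ^ ((5 : ℝ) / 2) / ((n : ℝ) - 1) := by
  have hn₁ : 1 ≤ n := by omega
  have hk : 2 * k ≤ n := by omega
  have hΔ := Delta_pos hn₁ hk1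
  calc _ ≤ ∑ l ∈ range k, pOneMax n k l *
          (((k : ℝ) - l + exp 1 * (((k : ℝ) - l) * ((k : ℝ) - l - 1) / (l + 1))) / Delta n k) :=
        sum_le_sum fun l hl => mul_le_mul_of_nonneg_left
          (sum_one_div_Delta_Icc_le hn₁ (mem_range.1 hl).le (by omega)) (pOneMax_nonneg n k l)
    _ = (∑ l ∈ range k, pOneMax n k l * ((k : ℝ) - l)) / Delta n k + exp 1 * (1 / Delta n k) *
          ∑ l ∈ range k, pOneMax n k l * (((k : ℝ) - l) * ((k : ℝ) - l - 1) / (l + 1)) := by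
        rw [sum_div, mul_sum, ← sum_add_distrib]
        exact sum_congr rfl fun l _ => by ring
    _ ≤ 1 + exp 1 * (exp 1 * n / k) * (exp 1 * k / n ^ 2) := by
        gcongr ?_ + _ * ?_ * ?_
        · exact (div_le_one hΔ).2 (sum_pOneMax_mul_sub_le_Delta n k)
        · exact sum_nonneg fun l hl => mul_nonneg (pOneMax_nonneg n k l)
            (sub_mul_sub_sub_one_div_nonneg (mem_range.1 hl))
        · exact one_div_Delta_le hn₁ hk1
        · exact sum_pOneMax_mul_le hk
    _ = 1 + exp 3 / n := by
        have : (k : ℝ) ≠ 0 := by positivity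
        rw [show (3 : ℝ) = 1 + 1 + 1 by norm_num, exp_add, exp_add]
        field_simp
    _ ≤ _ := by grw [exp_three_div_le hn]
end

section
/- For k ∈ {0, ..., n+1}, the normalized drift satisfies (1 + 1/n)^{k−1} · k/n ≤ Δ*_n(k) ≤ (1 + 1/n)^n · k/n, with equality at k = 0 and k = n+1. -/
/-!
With `c = 1/n` and `m = n + 1 - k`, the drift factors as
`Δ = ∑_{ℓ=1}^{k} C(k,ℓ) c^ℓ · ∑_{j<ℓ} (ℓ-j) C(m,j) c^j`.
The inner sum lies between its `j = 0` term `ℓ` and `ℓ (1+c)^m` (drop `-j`, complete the binomial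
sum), and `∑ ℓ C(k,ℓ) c^ℓ = k c (1+c)^(k-1)`. Since `k - 1 + m = n` for `1 ≤ k`, this gives both
bounds. At `k = n + 1` the inner sum is exactly `ℓ`, and at `k = 0` everything vanishes.
-/

open Finset

/-- Normalized drift `Δ*_n(k)` of the (1+1) EA on OneMax. -/
noncomputable def deltaStar (n k : ℕ) : ℝ :=
  ∑ l ∈ Icc 1 k, ∑ j ∈ range l,
    ((l : ℝ) - j) * (k.choose l) * ((n + 1 - k).choose j) * (1 / n) ^ (j + l)

section Binomial

variable {R : Type*}

theorem sum_range_choose_mul_pow [CommSemiring R] (m : ℕ) (c : R) :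
    ∑ j ∈ range (m + 1), (m.choose j : R) * c ^ j = (1 + c) ^ m := by
  simp [add_comm (1 : R), add_pow, mul_comm]

theorem sum_range_choose_mul_pow_le [CommSemiring R] [PartialOrder R] [IsOrderedRing R]
    (m N : ℕ) {c : R} (hc : 0 ≤ c) :
    ∑ j ∈ range N, (m.choose j : R) * c ^ j ≤ (1 + c) ^ m := by
  rw [← sum_range_choose_mul_pow]
  calc ∑ j ∈ range N, (m.choose j : R) * c ^ j
      ≤ ∑ j ∈ range (max N (m + 1)), (m.choose j : R) * c ^ j :=
        sum_le_sum_of_subset_of_nonneg (range_mono (le_max_left _ _))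
          fun _ _ _ => by positivity
    _ = ∑ j ∈ range (m + 1), (m.choose j : R) * c ^ j := by
        refine (sum_subset (range_mono (le_max_right _ _)) fun j _ hj => ?_).symm
        rw [Nat.choose_eq_zero_of_lt (by simpa using hj), Nat.cast_zero, zero_mul]

theorem sum_Icc_choose_mul_pow_mul [CommSemiring R] (k : ℕ) (c : R) :
    ∑ l ∈ Icc 1 k, (k.choose l : R) * c ^ l * l = k * c * (1 + c) ^ (k - 1) := by
  cases k with
  | zero => simp
  | succ k =>
    rw [← Ico_add_one_right_eq_Icc, sum_Ico_eq_sum_range, Nat.add_sub_cancel, Nat.add_sub_cancel,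
      ← sum_range_choose_mul_pow, mul_sum]
    refine sum_congr rfl fun i _ => ?_
    have h : ((k : R) + 1) * k.choose i = (k + 1).choose (i + 1) * (i + 1) := by
      simpa using congrArg (Nat.cast : ℕ → R) (Nat.add_one_mul_choose_eq k i)
    calc ((k + 1).choose (1 + i) : R) * c ^ (1 + i) * ((1 + i : ℕ) : R)
        = ((k + 1).choose (i + 1) * (i + 1) : R) * (c * c ^ i) := by
          rw [add_comm 1 i, pow_succ']; push_cast; ring
      _ = ((k + 1 : ℕ) : R) * c * ((k.choose i : R) * c ^ i) := by rw [← h]; push_cast; ring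

end Binomial

section Drift

variable {R : Type*} [CommRing R] [PartialOrder R] [IsStrictOrderedRing R] {c : R}

theorem le_sum_range_sub_mul_choose_mul_pow (m : ℕ) {l : ℕ} (hl : 0 < l) (hc : 0 ≤ c) :
    (l : R) ≤ ∑ j ∈ range l, ((l : R) - j) * m.choose j * c ^ j := by
  have hterm : ∀ j ∈ range l, 0 ≤ ((l : R) - j) * m.choose j * c ^ j := fun j hj => by
    have hjl : (j : R) ≤ l := by exact_mod_cast (mem_range.mp hj).le
    have := sub_nonneg.mpr hjl
    positivity
  simpa using single_le_sum hterm (mem_range.mpr hl)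

theorem sum_range_sub_mul_choose_mul_pow_le (m l : ℕ) (hc : 0 ≤ c) :
    ∑ j ∈ range l, ((l : R) - j) * m.choose j * c ^ j ≤ l * (1 + c) ^ m :=
  calc ∑ j ∈ range l, ((l : R) - j) * m.choose j * c ^ j
      ≤ ∑ j ∈ range l, (l : R) * (m.choose j * c ^ j) := by
        refine sum_le_sum fun j _ => ?_
        rw [mul_assoc]
        exact mul_le_mul_of_nonneg_right (sub_le_self _ j.cast_nonneg) (by positivity)
    _ ≤ l * (1 + c) ^ m := by
        rw [← mul_sum]
        gcongr
        exact sum_range_choose_mul_pow_le m l hc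

theorem sum_range_sub_mul_choose_zero_mul_pow {l : ℕ} (hl : 0 < l) (c : R) :
    ∑ j ∈ range l, ((l : R) - j) * (0).choose j * c ^ j = l := by
  rw [sum_eq_single_of_mem 0 (mem_range.mpr hl) fun j _ hj => by
    rw [Nat.choose_eq_zero_of_lt (Nat.pos_of_ne_zero hj), Nat.cast_zero, mul_zero, zero_mul]]
  simp

def drift (m k : ℕ) (c : R) : R :=
  ∑ l ∈ Icc 1 k, (k.choose l : R) * c ^ l * ∑ j ∈ range l, ((l : R) - j) * m.choose j * c ^ j

theorem mul_mul_one_add_pow_le_drift (m k : ℕ) (hc : 0 ≤ c) :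
    k * c * (1 + c) ^ (k - 1) ≤ drift m k c := by
  rw [← sum_Icc_choose_mul_pow_mul, drift]
  refine sum_le_sum fun l hl => mul_le_mul_of_nonneg_left ?_ (by positivity)
  exact le_sum_range_sub_mul_choose_mul_pow m (mem_Icc.mp hl).1 hc

theorem drift_le_mul_mul_one_add_pow (m k : ℕ) (hc : 0 ≤ c) :
    drift m k c ≤ k * c * (1 + c) ^ (k - 1 + m) :=
  calc drift m k c ≤ ∑ l ∈ Icc 1 k, (k.choose l : R) * c ^ l * (l * (1 + c) ^ m) := by
        refine sum_le_sum fun l _ => mul_le_mul_of_nonneg_left ?_ (by positivity)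
        exact sum_range_sub_mul_choose_mul_pow_le m l hc
    _ = k * c * (1 + c) ^ (k - 1 + m) := by
        simp_rw [← mul_assoc, ← sum_mul, sum_Icc_choose_mul_pow_mul, pow_add]
        ring

theorem drift_zero_left (k : ℕ) (c : R) : drift 0 k c = k * c * (1 + c) ^ (k - 1) := by
  rw [← sum_Icc_choose_mul_pow_mul, drift]
  refine sum_congr rfl fun l hl => ?_
  rw [sum_range_sub_mul_choose_zero_mul_pow (mem_Icc.mp hl).1]

end Drift

theorem deltaStar_eq_drift (n k : ℕ) : deltaStar n k = drift (n + 1 - k) k (1 / (n : ℝ)) := by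
  refine sum_congr rfl fun l _ => ?_
  rw [mul_sum]
  refine sum_congr rfl fun j _ => ?_
  ring

theorem deltaStar_bounds_general (n k : ℕ) (hk : k ≤ n + 1) :
    ((1 + 1 / (n : ℝ)) ^ (k - 1) * (k / n) ≤ deltaStar n k ∧
      deltaStar n k ≤ (1 + 1 / (n : ℝ)) ^ n * (k / n)) ∧
    ((k = 0 ∨ k = n + 1) →
      (1 + 1 / (n : ℝ)) ^ (k - 1) * (k / n) = deltaStar n k ∧
        deltaStar n k = (1 + 1 / (n : ℝ)) ^ n * (k / n)) := by
  have hc : (0 : ℝ) ≤ 1 / n := by positivity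
  have hlower : (1 + 1 / (n : ℝ)) ^ (k - 1) * (k / n) ≤ deltaStar n k :=
    calc (1 + 1 / (n : ℝ)) ^ (k - 1) * (k / n) = k * (1 / n) * (1 + 1 / n) ^ (k - 1) := by ring
      _ ≤ deltaStar n k := deltaStar_eq_drift n k ▸ mul_mul_one_add_pow_le_drift _ k hc
  have hupper : deltaStar n k ≤ (1 + 1 / (n : ℝ)) ^ n * (k / n) :=
    calc deltaStar n k ≤ k * (1 / n) * (1 + 1 / n) ^ (k - 1 + (n + 1 - k)) :=
          deltaStar_eq_drift n k ▸ drift_le_mul_mul_one_add_pow _ k hc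
      _ = (1 + 1 / (n : ℝ)) ^ n * (k / n) := by
          rcases k.eq_zero_or_pos with rfl | hk0
          · simp
          · rw [show k - 1 + (n + 1 - k) = n by omega]
            ring
  refine ⟨⟨hlower, hupper⟩, ?_⟩
  rintro (rfl | rfl)
  · simp [deltaStar]
  · rw [deltaStar_eq_drift, Nat.sub_self, drift_zero_left, Nat.add_sub_cancel]
    constructor <;> ring

/-- For `k ∈ {0, …, n+1}` the normalized drift satisfies
`(1 + 1/n)^{k−1} · k/n ≤ Δ*_n(k) ≤ (1 + 1/n)^n · k/n`,
with equality at `k = 0` and `k = n + 1`. -/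
theorem deltaStar_bounds (n k : ℕ) (hn : 1 ≤ n) (hk : k ≤ n + 1) :
    ((1 + 1 / (n : ℝ)) ^ (k - 1) * (k / n) ≤ deltaStar n k ∧
      deltaStar n k ≤ (1 + 1 / (n : ℝ)) ^ n * (k / n)) ∧
    ((k = 0 ∨ k = n + 1) →
      (1 + 1 / (n : ℝ)) ^ (k - 1) * (k / n) = deltaStar n k ∧
        deltaStar n k = (1 + 1 / (n : ℝ)) ^ n * (k / n)) :=
  deltaStar_bounds_general n k hk
end

section
/- For 0 ≤ α ≤ 1, the function S_1(α) := Σ_{ℓ≥0} (α^ℓ/ℓ!) Σ_{j=0}^{ℓ−1} (ℓ−j)(1−α)^j/j! equals the coefficient of z^{−1} in the Laurent expansion of e^{α/z + (1−α)z}/(1−z)², i.e., S_1(α) = [z^{−1}] e^{α/z + (1−α)z}/(1−z)². -/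
open Finset Complex

/-- The limiting normalized drift function
`S₁(α) = ∑_{ℓ≥0} (α^ℓ/ℓ!) ∑_{j=0}^{ℓ−1} (ℓ−j)(1−α)^j/j!`. -/
noncomputable def S1 (α : ℝ) : ℝ :=
  ∑' l : ℕ, (α ^ l / Nat.factorial l) *
    ∑ j ∈ range l, ((l : ℝ) - j) * (1 - α) ^ j / Nat.factorial j

/-!
Write `e^{a/z + (1-a)z}/(1-z)² = e^{a/z} · g(z)` with `g(z) = e^{(1-a)z}/(1-z)²`. The Cauchy
product of the exponential series with `∑ (m+1) zᵐ = (1-z)⁻²` gives `g(z) = ∑ cₘ zᵐ`, where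
`cₘ = ∑_{j ≤ m} (m+1-j)(1-a)ʲ/j!` is the inner sum of `S₁` at `ℓ = m + 1`. Multiplying by
`e^{a/z} = ∑ aˡ/l! z⁻ˡ` gives a double Laurent series converging absolutely and uniformly on
`|z| = r < 1`, so it may be integrated term by term. Only the terms with `m = l - 1` contribute
to the coefficient of `z⁻¹`, and their sum is `∑_l aˡ/l! c_{l-1} = S₁(a)`.
-/

open Metric

theorem hasSum_circleIntegral_of_norm_le {ι E : Type*} [Countable ι] [NormedAddCommGroup E]
    [NormedSpace ℂ E] {f : ι → ℂ → E} {F : ℂ → E} {c : ℂ} {R : ℝ} (hR : 0 ≤ R)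
    (hf : ∀ i, ContinuousOn (f i) (sphere c R)) {b : ι → ℝ} (hb : Summable b)
    (hfb : ∀ i, ∀ z ∈ sphere c R, ‖f i z‖ ≤ b i)
    (hF : ∀ z ∈ sphere c R, HasSum (fun i => f i z) (F z)) :
    HasSum (fun i => ∮ z in C(c, R), f i z) (∮ z in C(c, R), F z) := by
  have hmem := circleMap_mem_sphere c hR
  refine intervalIntegral.hasSum_integral_of_dominated_convergence (fun i _ => R * b i)
    (fun i => ?_) (fun i => ?_) (.of_forall fun _ _ => hb.mul_left R) intervalIntegrable_const
    (.of_forall fun θ _ => (hF _ (hmem θ)).const_smul _)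
  · rw [funext (deriv_circleMap c R)]
    exact (((continuous_circleMap 0 R).mul continuous_const).smul
      ((hf i).comp_continuous (continuous_circleMap c R) hmem)).aestronglyMeasurable
  · refine .of_forall fun θ _ => ?_
    rw [norm_smul, deriv_circleMap, norm_mul, norm_I, mul_one, norm_circleMap_zero,
      abs_of_nonneg hR]
    exact mul_le_mul_of_nonneg_left (hfb i _ (hmem θ)) hR

theorem circleIntegral_sub_center_zpow (c : ℂ) {R : ℝ} (hR : R ≠ 0) (n : ℤ) :
    (∮ z in C(c, R), (z - c) ^ n) = if n = -1 then 2 * Real.pi * I else 0 := by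
  split_ifs with h
  · simp [h, hR]
  · exact circleIntegral.integral_sub_zpow_of_ne h c c R

theorem hasSum_residue_of_hasSum_laurent {ι : Type*} [Countable ι] {F : ℂ → ℂ} {coef : ι → ℂ}
    {e : ι → ℤ} {c : ℂ} {R : ℝ} (hR : 0 < R)
    (hF : ∀ z ∈ sphere c R, HasSum (fun i => coef i * (z - c) ^ e i) (F z))
    (hsum : Summable fun i => ‖coef i‖ * R ^ e i) :
    HasSum (fun i => if e i = -1 then coef i else 0)
      ((2 * Real.pi * I)⁻¹ * ∮ z in C(c, R), F z) := by
  have hcont : ∀ i, ContinuousOn (fun z => coef i * (z - c) ^ e i) (sphere c R) := fun i =>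
    continuousOn_const.mul <| (continuousOn_id.sub continuousOn_const).zpow₀ _ fun z hz =>
      .inl <| sub_ne_zero.2 <| ne_of_mem_sphere hz hR.ne'
  have hbound : ∀ i, ∀ z ∈ sphere c R, ‖coef i * (z - c) ^ e i‖ ≤ ‖coef i‖ * R ^ e i :=
    fun i z hz => by rw [norm_mul, norm_zpow, ← dist_eq_norm, mem_sphere.1 hz]
  have hint := (hasSum_circleIntegral_of_norm_le hR.le hcont hsum hbound hF).mul_left
    (2 * Real.pi * I)⁻¹
  refine hint.congr_fun fun i => ?_
  rw [circleIntegral.integral_const_mul, circleIntegral_sub_center_zpow c hR.ne']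
  split_ifs
  · field_simp
  · simp

noncomputable def S1Coeff (a : ℂ) (l : ℕ) : ℂ :=
  ∑ j ∈ range l, ((l : ℂ) - j) * (1 - a) ^ j / j.factorial

theorem ofReal_S1 (α : ℝ) :
    (S1 α : ℂ) = ∑' l : ℕ, (α : ℂ) ^ l / l.factorial * S1Coeff α l := by
  rw [S1, ofReal_tsum]
  push_cast [S1Coeff]
  rfl

theorem sum_range_mul_choose_one_mul_pow (a z : ℂ) (m : ℕ) :
    ∑ j ∈ range (m + 1),
        ((1 - a) * z) ^ j / j.factorial * (((m - j + 1).choose 1 : ℕ) * z ^ (m - j))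
      = S1Coeff a (m + 1) * z ^ m := by
  rw [S1Coeff, sum_mul]
  refine sum_congr rfl fun j hj => ?_
  have hjm : j ≤ m := Nat.lt_succ_iff.1 (mem_range.1 hj)
  rw [Nat.choose_one_right, Nat.cast_add, Nat.cast_sub hjm, ← pow_mul_pow_sub z hjm, mul_pow]
  push_cast
  ring

theorem summable_norm_choose_one_mul_pow {z : ℂ} (hz : ‖z‖ < 1) :
    Summable fun n : ℕ => ‖(((n + 1).choose 1 : ℕ) : ℂ) * z ^ n‖ := by
  refine (summable_choose_mul_geometric_of_norm_lt_one 1 (r := ‖z‖) (by simpa using hz)).congr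
    fun n => ?_
  rw [norm_mul, norm_pow, norm_natCast]

theorem summable_norm_S1Coeff_mul_pow (a : ℂ) {z : ℂ} (hz : ‖z‖ < 1) :
    Summable fun m => ‖S1Coeff a (m + 1) * z ^ m‖ := by
  simpa only [sum_range_mul_choose_one_mul_pow] using summable_norm_sum_mul_range_of_summable_norm
    (NormedSpace.norm_expSeries_div_summable ((1 - a) * z)) (summable_norm_choose_one_mul_pow hz)

theorem hasSum_S1Coeff_mul_pow (a : ℂ) {z : ℂ} (hz : ‖z‖ < 1) :
    HasSum (fun m => S1Coeff a (m + 1) * z ^ m) (exp ((1 - a) * z) / (1 - z) ^ 2) := by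
  have h := hasSum_sum_range_mul_of_summable_norm
    (NormedSpace.norm_expSeries_div_summable ((1 - a) * z)) (summable_norm_choose_one_mul_pow hz)
  simp only [sum_range_mul_choose_one_mul_pow] at h
  rwa [(NormedSpace.expSeries_div_hasSum_exp ((1 - a) * z)).tsum_eq, ← exp_eq_exp_ℂ,
    (hasSum_choose_mul_geometric_of_norm_lt_one 1 hz).tsum_eq, ← div_eq_mul_one_div] at h

/-- The index `(l, m)` stands for the product of the term `(a / z) ^ l / l!` of `exp (a / z)`
with the term `S1Coeff a (m + 1) * z ^ m` of `exp ((1 - a) * z) / (1 - z) ^ 2`. -/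
noncomputable def laurentCoeff (a : ℂ) (p : ℕ × ℕ) : ℂ :=
  a ^ p.1 / p.1.factorial * S1Coeff a (p.2 + 1)

def laurentExp (p : ℕ × ℕ) : ℤ := p.2 - p.1

theorem laurentCoeff_mul_zpow (a : ℂ) {z : ℂ} (hz : z ≠ 0) (p : ℕ × ℕ) :
    laurentCoeff a p * z ^ laurentExp p
      = (a / z) ^ p.1 / p.1.factorial * (S1Coeff a (p.2 + 1) * z ^ p.2) := by
  rw [laurentCoeff, laurentExp, zpow_sub₀ hz, zpow_natCast, zpow_natCast, div_pow]
  ring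

theorem summable_norm_laurentCoeff_mul_zpow (a : ℂ) {z : ℂ} (hz0 : z ≠ 0) (hz1 : ‖z‖ < 1) :
    Summable fun p => ‖laurentCoeff a p * z ^ laurentExp p‖ := by
  simpa only [laurentCoeff_mul_zpow a hz0] using
    (NormedSpace.norm_expSeries_div_summable (a / z)).mul_norm
      (summable_norm_S1Coeff_mul_pow a hz1)

theorem hasSum_laurentCoeff_mul_zpow (a : ℂ) {z : ℂ} (hz0 : z ≠ 0) (hz1 : ‖z‖ < 1) :
    HasSum (fun p => laurentCoeff a p * z ^ laurentExp p)
      (exp (a / z + (1 - a) * z) / (1 - z) ^ 2) := by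
  have h := (NormedSpace.expSeries_div_hasSum_exp (a / z)).mul (hasSum_S1Coeff_mul_pow a hz1)
    ((NormedSpace.norm_expSeries_div_summable (a / z)).mul_norm
      (summable_norm_S1Coeff_mul_pow a hz1)).of_norm
  simp only [laurentCoeff_mul_zpow a hz0]
  rwa [← exp_eq_exp_ℂ, ← mul_div_assoc, ← exp_add] at h

theorem hasSum_laurentCoeff_residue (a : ℂ) (l : ℕ) :
    HasSum (fun m => if laurentExp (l, m) = -1 then laurentCoeff a (l, m) else 0)
      (a ^ l / l.factorial * S1Coeff a l) := by
  cases l with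
  | zero => simp [laurentExp, S1Coeff, hasSum_zero]
  | succ n =>
    refine (hasSum_ite_eq n (laurentCoeff a (n + 1, n))).congr_fun fun m => ?_
    have hexp : laurentExp (n + 1, m) = -1 ↔ m = n := by
      simp only [laurentExp]
      push_cast
      omega
    simp only [hexp]
    split_ifs with hmn
    · rw [hmn]
    · rfl

theorem S1_eq_laurent_coeff_general (α : ℝ)
    (r : ℝ) (hr0 : 0 < r) (hr1 : r < 1) :
    (2 * Real.pi * Complex.I)⁻¹ *
      (∮ z in C(0, r),
        Complex.exp ((α : ℂ) / z + (1 - (α : ℂ)) * z) / (1 - z) ^ 2)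
      = (S1 α : ℂ) := by
  have hsphere : ∀ z ∈ sphere (0 : ℂ) r, z ≠ 0 ∧ ‖z‖ < 1 := fun z hz => by
    rw [mem_sphere_zero_iff_norm] at hz
    exact ⟨norm_pos_iff.1 (hz ▸ hr0), hz ▸ hr1⟩
  have hr : (r : ℂ) ≠ 0 ∧ ‖(r : ℂ)‖ < 1 := hsphere r (by simp [abs_of_pos hr0])
  have hres := hasSum_residue_of_hasSum_laurent (coef := laurentCoeff α) (e := laurentExp)
    (c := 0) (F := fun z => exp ((α : ℂ) / z + (1 - (α : ℂ)) * z) / (1 - z) ^ 2) hr0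
    (fun z hz => by
      simpa only [sub_zero] using hasSum_laurentCoeff_mul_zpow α (hsphere z hz).1 (hsphere z hz).2)
    (by simpa [norm_mul, norm_zpow, abs_of_pos hr0] using
      summable_norm_laurentCoeff_mul_zpow α hr.1 hr.2)
  rw [ofReal_S1, (hres.prod_fiberwise (hasSum_laurentCoeff_residue α)).tsum_eq]

/-- For `0 ≤ α ≤ 1`, `S₁(α)` equals the coefficient of `z⁻¹` in the Laurent
expansion of `e^{α/z + (1−α)z}/(1−z)²` around `0`, expressed as the residue at
`0`, i.e. as `(2πi)⁻¹` times the contour integral over a small circle around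
the origin. -/
theorem S1_eq_laurent_coeff (α : ℝ) (h0 : 0 ≤ α) (h1 : α ≤ 1)
    (r : ℝ) (hr0 : 0 < r) (hr1 : r < 1) :
    (2 * Real.pi * Complex.I)⁻¹ *
      (∮ z in C(0, r),
        Complex.exp ((α : ℂ) / z + (1 - (α : ℂ)) * z) / (1 - z) ^ 2)
      = (S1 α : ℂ) :=
  S1_eq_laurent_coeff_general α r hr0 hr1
end
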